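/- arXiv:2401.15719 — 2 statements merged into one kernel-verified Lean document; each statement's English description precedes it below -/
import Mathlib

section
/- For every δ ∈ (0,1) and λ > 0 there exists a constant K (depending only on δ and λ) such that for all integers 0 ≤ j ≤ t: (1/(j+2)) Σ_{i=j}^{t} m_j^i exp(−λ m_j^i) ≤ K/(j+1)^{1−δ}, where m_j^i = Σ_{k=j}^{i} 1/(k+1)^δ. In particular, the quantities C_j^t arising in the decomposition of Φ_j^t, which satisfy ‖C_j^t‖_op ≤ ((ε_j − ε_{j+1})/ε_j) Σ_{i=j}^t m_j^i e^{−λ m_j^i} with ε_j = 1/(j+1)^δ, satisfy ‖C_j^t‖_op = O(1/(j+1)^{1−δ}) uniformly in t. -/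
/-!
Once `i + 1 ≥ 2 j`, the sum `m_j^i` has at least `(i + 1) / 2` terms, each at least `ε_i`, so
`m_j^i ≥ (i + 1)^(1-δ) / 2`, and for `μ > 0` the factor `e^{-μ m_j^i}` beats `(i + 1)^δ = 1 / ε_i`
up to a constant times `(j + 1)^δ`; for smaller `i` that factor is at most `2 (j + 1)^δ` anyway.
Hence `m e^{-λ m} ≤ C (j + 1)^δ · ε_i e^{-λ m / 4}` for `m = m_j^i`, and the sum of the right-hand
sides is a right-endpoint Riemann sum of the decreasing function `x ↦ e^{-λ x / 4}` along the
points `0 < m_j^j < m_j^{j+1} < ⋯`, hence at most `4 / λ`. The second claim follows from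
`(ε_j - ε_{j+1}) / ε_j = 1 - ((j + 1) / (j + 2))^δ ≤ 1 / (j + 2)`.
-/

open scoped BigOperators

/-- The stepsizes ε_k = 1/(k+1)^δ. -/
noncomputable def eps (δ : ℝ) (k : ℕ) : ℝ := 1 / ((k : ℝ) + 1) ^ δ

/-- The partial stepsize sums m_j^i = Σ_{k=j}^i ε_k. -/
noncomputable def psum (δ : ℝ) (j i : ℕ) : ℝ := ∑ k ∈ Finset.Icc j i, eps δ k

open Real Finset

theorem mul_exp_neg_mul_le {a : ℝ} (ha : 0 < a) (x : ℝ) : x * exp (-a * x) ≤ 1 / a := by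
  have h := add_one_le_exp (a * x)
  have hx : a * x * exp (-a * x) ≤ 1 := by
    calc a * x * exp (-a * x) ≤ exp (a * x) * exp (-a * x) := by gcongr; linarith
      _ = 1 := by rw [← exp_add]; simp
  rw [le_div_iff₀ ha]
  linarith

theorem rpow_le_mul_exp {p θ v : ℝ} (hp : 0 < p) (hθ : 0 < θ) (hv : 0 ≤ v) :
    v ^ p ≤ (p / θ) ^ p * exp (θ * v) := by
  have hv' : v ≤ p / θ * exp (θ * v / p) := by
    have h := add_one_le_exp (θ * v / p)
    calc v = p / θ * (θ * v / p) := by field_simp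
      _ ≤ p / θ * exp (θ * v / p) := by gcongr; linarith
  calc v ^ p ≤ (p / θ * exp (θ * v / p)) ^ p := by gcongr
    _ = (p / θ) ^ p * exp (θ * v) := by
      rw [mul_rpow (by positivity) (exp_pos _).le, ← exp_mul, div_mul_cancel₀ _ hp.ne']

theorem mul_mul_exp_neg_mul_add_le (μ s d : ℝ) :
    μ * d * exp (-μ * (s + d)) ≤ exp (-μ * s) - exp (-μ * (s + d)) := by
  have h := add_one_le_exp (μ * d)
  have hsplit : exp (-μ * s) = exp (μ * d) * exp (-μ * (s + d)) := by
    rw [← exp_add]; ring_nf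
  rw [hsplit]
  nlinarith [exp_pos (-μ * (s + d))]

theorem sum_exp_neg_mul_sum_Icc_mul_le (a : ℕ → ℝ) {μ : ℝ} (hμ : 0 < μ) (j t : ℕ) :
    ∑ i ∈ Icc j t, exp (-μ * ∑ k ∈ Icc j i, a k) * a i ≤ 1 / μ := by
  rcases lt_or_ge t j with htj | hjt
  · simp [Icc_eq_empty_of_lt htj, hμ.le]
  have telescope : ∀ t, j ≤ t →
      μ * ∑ i ∈ Icc j t, exp (-μ * ∑ k ∈ Icc j i, a k) * a i
        ≤ 1 - exp (-μ * ∑ k ∈ Icc j t, a k) := by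
    intro t ht
    induction t, ht using Nat.le_induction with
    | base =>
      have h := mul_mul_exp_neg_mul_add_le μ 0 (a j)
      simp only [Icc_self, sum_singleton, zero_add, mul_zero, exp_zero] at h ⊢
      linarith
    | succ t ht ih =>
      have h := mul_mul_exp_neg_mul_add_le μ (∑ k ∈ Icc j t, a k) (a (t + 1))
      rw [sum_Icc_succ_top (by omega), sum_Icc_succ_top (by omega)]
      linarith
  rw [le_div_iff₀ hμ, mul_comm]
  linarith [telescope t hjt, exp_pos (-μ * ∑ k ∈ Icc j t, a k)]

theorem eps_pos (δ : ℝ) (k : ℕ) : 0 < eps δ k := by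
  unfold eps; positivity

theorem eps_antitone {δ : ℝ} (hδ : 0 ≤ δ) : Antitone (eps δ) := by
  intro k i h
  unfold eps
  gcongr

theorem eps_mul_add_one (δ : ℝ) (i : ℕ) : eps δ i * ((i : ℝ) + 1) = ((i : ℝ) + 1) ^ (1 - δ) := by
  rw [eps, rpow_sub (by positivity), rpow_one]
  ring

theorem eps_sub_eps_succ_div_eps_le {δ : ℝ} (hδ : δ ≤ 1) (j : ℕ) :
    (eps δ j - eps δ (j + 1)) / eps δ j ≤ 1 / ((j : ℝ) + 2) := by
  have hratio : eps δ (j + 1) / eps δ j = (((j : ℝ) + 1) / ((j : ℝ) + 2)) ^ δ := by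
    rw [div_rpow (by positivity) (by positivity), eps, eps]
    push_cast
    field_simp
    ring_nf
  have hle : ((j : ℝ) + 1) / ((j : ℝ) + 2) ≤ (((j : ℝ) + 1) / ((j : ℝ) + 2)) ^ δ :=
    self_le_rpow_of_le_one (by positivity) (by rw [div_le_one (by positivity)]; linarith) hδ
  calc (eps δ j - eps δ (j + 1)) / eps δ j = 1 - eps δ (j + 1) / eps δ j := by
        rw [sub_div, div_self (eps_pos δ j).ne']
    _ ≤ 1 - ((j : ℝ) + 1) / ((j : ℝ) + 2) := by rw [hratio]; linarith
    _ = 1 / ((j : ℝ) + 2) := by field_simp; ring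

theorem psum_nonneg (δ : ℝ) (j i : ℕ) : 0 ≤ psum δ j i :=
  sum_nonneg fun k _ => (eps_pos δ k).le

theorem card_mul_eps_le_psum {δ : ℝ} (hδ : 0 ≤ δ) {j i : ℕ} (h : j ≤ i) :
    ((i : ℝ) + 1 - j) * eps δ i ≤ psum δ j i := by
  have hcard : ((i + 1 - j : ℕ) : ℝ) = (i : ℝ) + 1 - j := by
    rw [Nat.cast_sub (by omega)]
    push_cast
    ring
  have h := card_nsmul_le_sum (Icc j i) (eps δ) (eps δ i)
    fun k hk => eps_antitone hδ (mem_Icc.mp hk).2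
  rwa [nsmul_eq_mul, Nat.card_Icc, hcard] at h

theorem rpow_one_sub_le_two_mul_psum {δ : ℝ} (hδ : 0 ≤ δ) {j i : ℕ} (h : 2 * j ≤ i + 1) :
    ((i : ℝ) + 1) ^ (1 - δ) ≤ 2 * psum δ j i := by
  have hcard := card_mul_eps_le_psum hδ (by omega : j ≤ i)
  have hji : 2 * (j : ℝ) ≤ i + 1 := by exact_mod_cast h
  rw [← eps_mul_add_one]
  nlinarith [eps_pos δ i]

theorem exists_rpow_mul_exp_neg_psum_le {δ μ : ℝ} (hδ : δ ∈ Set.Ioo (0 : ℝ) 1) (hμ : 0 < μ) :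
    ∃ C, ∀ j i : ℕ, j ≤ i → ((i : ℝ) + 1) ^ δ * exp (-μ * psum δ j i) ≤ C * ((j : ℝ) + 1) ^ δ := by
  obtain ⟨hδ0, hδ1⟩ := hδ
  set p := δ / (1 - δ)
  have hp : 0 < p := div_pos hδ0 (by linarith)
  set B := (p / (μ / 2)) ^ p
  have hB : 0 ≤ B := by positivity
  refine ⟨2 + B, fun j i hji => ?_⟩
  have hm := psum_nonneg δ j i
  have hj : 1 ≤ ((j : ℝ) + 1) ^ δ := one_le_rpow (by linarith [j.cast_nonneg (α := ℝ)]) hδ0.le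
  rcases lt_or_ge (i + 1) (2 * j) with hi | hi
  · have hi' : (i : ℝ) + 1 ≤ 2 * ((j : ℝ) + 1) := by
      have : (i : ℝ) + 1 ≤ 2 * j := by exact_mod_cast hi.le
      linarith
    have hpow : ((i : ℝ) + 1) ^ δ ≤ 2 * ((j : ℝ) + 1) ^ δ := calc
      ((i : ℝ) + 1) ^ δ ≤ (2 * ((j : ℝ) + 1)) ^ δ := by gcongr
      _ = 2 ^ δ * ((j : ℝ) + 1) ^ δ := mul_rpow (by norm_num) (by positivity)
      _ ≤ 2 * ((j : ℝ) + 1) ^ δ := by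
        gcongr; exact rpow_le_self_of_one_le (by norm_num) hδ1.le
    have hexp : exp (-μ * psum δ j i) ≤ 1 := exp_le_one_iff.mpr (by nlinarith)
    calc ((i : ℝ) + 1) ^ δ * exp (-μ * psum δ j i) ≤ 2 * ((j : ℝ) + 1) ^ δ * 1 := by gcongr
      _ ≤ (2 + B) * ((j : ℝ) + 1) ^ δ := by nlinarith
  · set v := ((i : ℝ) + 1) ^ (1 - δ)
    have hv := rpow_one_sub_le_two_mul_psum hδ0.le hi
    have hvp : v ^ p = ((i : ℝ) + 1) ^ δ := by
      rw [← rpow_mul (by positivity)]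
      congr 1
      exact mul_div_cancel₀ δ (by linarith : (1 - δ) ≠ 0)
    calc ((i : ℝ) + 1) ^ δ * exp (-μ * psum δ j i) = v ^ p * exp (-μ * psum δ j i) := by rw [hvp]
      _ ≤ B * exp (μ / 2 * v) * exp (-μ * psum δ j i) := by
        gcongr; exact rpow_le_mul_exp hp (by positivity) (by positivity)
      _ = B * exp (μ / 2 * v - μ * psum δ j i) := by rw [mul_assoc, ← exp_add]; ring_nf
      _ ≤ B * 1 := by gcongr; exact exp_le_one_iff.mpr (by nlinarith)
      _ ≤ (2 + B) * ((j : ℝ) + 1) ^ δ := by nlinarith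

theorem exists_sum_psum_mul_exp_neg_le {δ lam : ℝ} (hδ : δ ∈ Set.Ioo (0 : ℝ) 1) (hlam : 0 < lam) :
    ∃ K, ∀ j t : ℕ,
      ∑ i ∈ Icc j t, psum δ j i * exp (-lam * psum δ j i) ≤ K * ((j : ℝ) + 1) ^ δ := by
  obtain ⟨C, hC⟩ := exists_rpow_mul_exp_neg_psum_le hδ (by positivity : 0 < lam / 4)
  have hC0 : 0 ≤ C := by
    have := hC 0 0 le_rfl
    simp only [CharP.cast_eq_zero, zero_add, one_rpow, one_mul, mul_one] at this
    exact (exp_pos _).le.trans this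
  refine ⟨2 / lam * C * (1 / (lam / 4)), fun j t => ?_⟩
  have hterm : ∀ i ∈ Icc j t, psum δ j i * exp (-lam * psum δ j i) ≤
      2 / lam * C * ((j : ℝ) + 1) ^ δ * (exp (-(lam / 4) * psum δ j i) * eps δ i) := by
    intro i hi
    set m := psum δ j i
    have hhalf : m * exp (-(lam / 2) * m) ≤ 2 / lam := by
      simpa using mul_exp_neg_mul_le (by positivity : 0 < lam / 2) m
    have hquarter : exp (-(lam / 4) * m) ≤ C * ((j : ℝ) + 1) ^ δ * eps δ i := by
      rw [eps, mul_one_div, le_div_iff₀ (by positivity), mul_comm]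
      exact hC j i (mem_Icc.mp hi).1
    calc m * exp (-lam * m)
        = m * exp (-(lam / 2) * m) * exp (-(lam / 4) * m) * exp (-(lam / 4) * m) := by
          rw [mul_assoc, mul_assoc, ← exp_add, ← exp_add]; ring_nf
      _ ≤ 2 / lam * (C * ((j : ℝ) + 1) ^ δ * eps δ i) * exp (-(lam / 4) * m) := by gcongr
      _ = _ := by ring
  calc ∑ i ∈ Icc j t, psum δ j i * exp (-lam * psum δ j i)
      ≤ ∑ i ∈ Icc j t,
          2 / lam * C * ((j : ℝ) + 1) ^ δ * (exp (-(lam / 4) * psum δ j i) * eps δ i) :=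
        sum_le_sum hterm
    _ = 2 / lam * C * ((j : ℝ) + 1) ^ δ *
          ∑ i ∈ Icc j t, exp (-(lam / 4) * ∑ k ∈ Icc j i, eps δ k) * eps δ i := by
        rw [mul_sum]; rfl
    _ ≤ 2 / lam * C * ((j : ℝ) + 1) ^ δ * (1 / (lam / 4)) := by
        gcongr; exact sum_exp_neg_mul_sum_Icc_mul_le _ (by positivity) j t
    _ = 2 / lam * C * (1 / (lam / 4)) * ((j : ℝ) + 1) ^ δ := by ring

/-- The analytic estimate of Appendix B bounding the matrices C_j^t: for δ ∈ (0,1) and λ > 0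
there is K (depending only on δ, λ) with
(1/(j+2)) Σ_{i=j}^t m_j^i exp(−λ m_j^i) ≤ K/(j+1)^{1−δ} for all 0 ≤ j ≤ t. In particular any
family c_{j,t} satisfying c_{j,t} ≤ ((ε_j − ε_{j+1})/ε_j) Σ_{i=j}^t m_j^i e^{−λ m_j^i} is
O(1/(j+1)^{1−δ}) uniformly in t. -/
theorem appendixB_Cjt_bound (δ lam : ℝ) (hδ : δ ∈ Set.Ioo (0:ℝ) 1) (hlam : 0 < lam) :
    ∃ K : ℝ,
      (∀ j t : ℕ, j ≤ t →
        (1 / ((j : ℝ) + 2)) * ∑ i ∈ Finset.Icc j t, psum δ j i * Real.exp (-lam * psum δ j i)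
          ≤ K / ((j : ℝ) + 1) ^ (1 - δ)) ∧
      ∀ c : ℕ → ℕ → ℝ,
        (∀ j t : ℕ, j ≤ t → c j t ≤ ((eps δ j - eps δ (j + 1)) / eps δ j) *
            ∑ i ∈ Finset.Icc j t, psum δ j i * Real.exp (-lam * psum δ j i)) →
        ∃ K' : ℝ, ∀ j t : ℕ, j ≤ t → c j t ≤ K' / ((j : ℝ) + 1) ^ (1 - δ) := by
  obtain ⟨K, hK⟩ := exists_sum_psum_mul_exp_neg_le hδ hlam
  have hS (j t : ℕ) : 0 ≤ ∑ i ∈ Icc j t, psum δ j i * exp (-lam * psum δ j i) :=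
    sum_nonneg fun i _ => mul_nonneg (psum_nonneg δ j i) (exp_pos _).le
  have hmain (j t : ℕ) : 1 / ((j : ℝ) + 2) * ∑ i ∈ Icc j t, psum δ j i * exp (-lam * psum δ j i)
      ≤ K / ((j : ℝ) + 1) ^ (1 - δ) := by
    have hj : (0 : ℝ) < j + 1 := by positivity
    calc 1 / ((j : ℝ) + 2) * ∑ i ∈ Icc j t, psum δ j i * exp (-lam * psum δ j i)
        ≤ 1 / ((j : ℝ) + 1) * ∑ i ∈ Icc j t, psum δ j i * exp (-lam * psum δ j i) := by
          gcongr
          · exact hS j t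
          · linarith
      _ ≤ 1 / ((j : ℝ) + 1) * (K * ((j : ℝ) + 1) ^ δ) := by gcongr; exact hK j t
      _ = K / ((j : ℝ) + 1) ^ (1 - δ) := by
          rw [rpow_sub hj, rpow_one]
          field_simp
  refine ⟨K, fun j t _ => hmain j t, fun c hc => ⟨K, fun j t hjt => ?_⟩⟩
  calc c j t ≤ _ := hc j t hjt
    _ ≤ 1 / ((j : ℝ) + 2) * ∑ i ∈ Icc j t, psum δ j i * exp (-lam * psum δ j i) :=
        mul_le_mul_of_nonneg_right (eps_sub_eps_succ_div_eps_le hδ.2.le j) (hS j t)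
    _ ≤ K / ((j : ℝ) + 1) ^ (1 - δ) := hmain j t
end

section
/- Let δ ∈ (0,1), α > 0 and c₁, c₂ ≥ 0, let ε_k = 1/(k+1)^δ and m_j^i = Σ_{k=j}^{i} ε_k. Suppose (φ_{j,t})_{0 ≤ j < t} are nonnegative real numbers satisfying φ_{j,t} ≤ c₁/(j+1)^{1−δ} + c₂ exp(−α m_j^{t−1}) for all 0 ≤ j < t. Then there exists a constant K (depending only on δ, α, c₁, c₂) such that for all integers t ≥ 1: (1/t) Σ_{j=0}^{t−1} φ_{j,t}² ≤ K/t^{1−δ}. -/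
open scoped BigOperators

/-!
Square the hypothesis using `(a + b)² ≤ 2(a² + b²)`. The first term squares to at most
`c₁² (j+1)^(δ-1)`, whose sum over `j < t` is at most `t^δ / δ` by telescoping the concavity bound
`δ (x+1)^(δ-1) ≤ (x+1)^δ - x^δ`. Every step size `ε_k` with `k < t` is at least `t^(-δ)`, so
`m_j^{t-1} ≥ (t - j) / t^δ`; the squared exponential term is then dominated by a geometric series
of ratio `exp (-2α / t^δ)`, whose sum is at most `t^δ / (2α)`. Hence
`Σ_{j<t} φ_{j,t}² ≤ (2c₁²/δ + c₂²/α) t^δ`, and dividing by `t` gives the claim.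
-/

open Real Finset

theorem mul_rpow_sub_one_le_rpow_add_one_sub_rpow {δ x : ℝ} (hδ₀ : 0 ≤ δ) (hδ₁ : δ ≤ 1)
    (hx : 0 ≤ x) : δ * (x + 1) ^ (δ - 1) ≤ (x + 1) ^ δ - x ^ δ := by
  have hx₁ : 0 < x + 1 := by linarith
  -- Bernoulli's inequality at `s = -1/(x+1)`, scaled by `(x+1)^δ`
  have hs : -1 ≤ -(1 / (x + 1)) := neg_le_neg ((div_le_one hx₁).mpr (by linarith))
  have hbern := rpow_one_add_le_one_add_mul_self hs hδ₀ hδ₁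
  rw [show 1 + -(1 / (x + 1)) = x / (x + 1) by field_simp; ring, div_rpow hx hx₁.le,
    div_le_iff₀ (rpow_pos_of_pos hx₁ δ)] at hbern
  rw [rpow_sub_one hx₁.ne']
  have : (1 + δ * -(1 / (x + 1))) * (x + 1) ^ δ = (x + 1) ^ δ - δ * ((x + 1) ^ δ / (x + 1)) := by
    field_simp; ring
  linarith

theorem sum_range_add_one_rpow_sub_one_le {δ : ℝ} (hδ₀ : 0 < δ) (hδ₁ : δ ≤ 1) (t : ℕ) :
    ∑ j ∈ range t, ((j : ℝ) + 1) ^ (δ - 1) ≤ (t : ℝ) ^ δ / δ := by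
  rw [le_div_iff₀ hδ₀, sum_mul]
  calc ∑ j ∈ range t, ((j : ℝ) + 1) ^ (δ - 1) * δ
      ≤ ∑ j ∈ range t, (((j + 1 : ℕ) : ℝ) ^ δ - ((j : ℕ) : ℝ) ^ δ) := by
        gcongr with j
        push_cast
        linarith [mul_rpow_sub_one_le_rpow_add_one_sub_rpow hδ₀.le hδ₁ j.cast_nonneg]
    _ = (t : ℝ) ^ δ := by
        rw [sum_range_sub (fun i : ℕ => (i : ℝ) ^ δ)]
        simp [zero_rpow hδ₀.ne']

theorem div_rpow_one_sub_sq_le {c y δ : ℝ} (hy : 1 ≤ y) (hδ : δ ≤ 1) :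
    (c / y ^ (1 - δ)) ^ 2 ≤ c ^ 2 * y ^ (δ - 1) := by
  have hu : 1 ≤ y ^ (1 - δ) := one_le_rpow hy (by linarith)
  rw [show δ - 1 = -(1 - δ) by ring, rpow_neg (by linarith), ← div_eq_mul_inv, div_pow]
  exact div_le_div_of_nonneg_left (sq_nonneg c) (by linarith) (by nlinarith)

theorem sum_range_exp_neg_pow_succ_le {x : ℝ} (hx : 0 < x) (n : ℕ) :
    ∑ i ∈ range n, exp (-x) ^ (i + 1) ≤ 1 / x := by
  set r := exp (-x)
  have hr₁ : r < 1 := exp_lt_one_iff.mpr (by linarith)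
  have hgeom : ∑ i ∈ range n, r ^ i ≤ 1 / (1 - r) := by
    simpa using geom_sum_Ico_le_of_lt_one (m := 0) (n := n) (exp_pos _).le hr₁
  -- `r / (1 - r) = 1 / (exp x - 1) ≤ 1 / x` because `x + 1 ≤ exp x`
  have hratio : r / (1 - r) ≤ 1 / x := by
    rw [div_le_div_iff₀ (by linarith) hx]
    have := add_one_le_exp x
    have : r * exp x = 1 := by rw [← exp_add]; simp
    nlinarith [exp_pos (-x)]
  calc ∑ i ∈ range n, r ^ (i + 1) = r * ∑ i ∈ range n, r ^ i := by
        rw [mul_sum]; simp only [pow_succ']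
    _ ≤ r * (1 / (1 - r)) := mul_le_mul_of_nonneg_left hgeom (exp_pos _).le
    _ ≤ 1 / x := by rwa [mul_one_div]

theorem sub_div_rpow_le_psum {δ : ℝ} (hδ : 0 ≤ δ) {j t : ℕ} (hjt : j < t) :
    ((t - j : ℕ) : ℝ) / (t : ℝ) ^ δ ≤ psum δ j (t - 1) := by
  have heps : ∀ k ∈ Icc j (t - 1), 1 / (t : ℝ) ^ δ ≤ eps δ k := by
    intro k hk
    have hkt : (k : ℝ) + 1 ≤ t := by
      rw [mem_Icc] at hk
      exact_mod_cast (by omega : k + 1 ≤ t)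
    exact one_div_le_one_div_of_le (by positivity) (rpow_le_rpow (by positivity) hkt hδ)
  calc ((t - j : ℕ) : ℝ) / (t : ℝ) ^ δ = #(Icc j (t - 1)) • (1 / (t : ℝ) ^ δ) := by
        rw [Nat.card_Icc, show t - 1 + 1 - j = t - j by omega, nsmul_eq_mul, mul_one_div]
    _ ≤ psum δ j (t - 1) := card_nsmul_le_sum _ _ _ heps

theorem mul_exp_neg_psum_sq_le {δ α c : ℝ} (hδ : 0 ≤ δ) (hα : 0 ≤ α) {j t : ℕ} (hjt : j < t) :
    (c * exp (-α * psum δ j (t - 1))) ^ 2 ≤ c ^ 2 * exp (-(2 * α / (t : ℝ) ^ δ)) ^ (t - j) := by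
  rw [mul_pow, ← exp_nat_mul, ← exp_nat_mul, Nat.cast_ofNat]
  refine mul_le_mul_of_nonneg_left (exp_le_exp.mpr ?_) (sq_nonneg c)
  have := mul_le_mul_of_nonneg_left (sub_div_rpow_le_psum hδ hjt) (by linarith : 0 ≤ 2 * α)
  linarith [show ((t - j : ℕ) : ℝ) * -(2 * α / (t : ℝ) ^ δ)
    = -(2 * α * (((t - j : ℕ) : ℝ) / (t : ℝ) ^ δ)) by ring]

theorem sum_range_sq_le_mul_rpow {δ α c₁ c₂ : ℝ} (hδ₀ : 0 < δ) (hδ₁ : δ ≤ 1) (hα : 0 < α)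
    {t : ℕ} (ht : 0 < t) {φ : ℕ → ℝ} (hφ₀ : ∀ j < t, 0 ≤ φ j)
    (hφ : ∀ j < t, φ j ≤ c₁ / ((j : ℝ) + 1) ^ (1 - δ) + c₂ * exp (-α * psum δ j (t - 1))) :
    ∑ j ∈ range t, φ j ^ 2 ≤ (2 * c₁ ^ 2 / δ + c₂ ^ 2 / α) * (t : ℝ) ^ δ := by
  set x := 2 * α / (t : ℝ) ^ δ
  have hx : 0 < x := by positivity
  have hterm : ∀ j ∈ range t,
      φ j ^ 2 ≤ 2 * c₁ ^ 2 * ((j : ℝ) + 1) ^ (δ - 1) + 2 * c₂ ^ 2 * exp (-x) ^ (t - j) := by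
    intro j hj
    have hjt := mem_range.mp hj
    have h₁ := div_rpow_one_sub_sq_le (c := c₁) (y := (j : ℝ) + 1)
      (by linarith [j.cast_nonneg (α := ℝ)]) hδ₁
    have h₂ := mul_exp_neg_psum_sq_le (c := c₂) hδ₀.le hα.le hjt
    calc φ j ^ 2
        ≤ (c₁ / ((j : ℝ) + 1) ^ (1 - δ) + c₂ * exp (-α * psum δ j (t - 1))) ^ 2 :=
          pow_le_pow_left₀ (hφ₀ j hjt) (hφ j hjt) 2
      _ ≤ 2 * ((c₁ / ((j : ℝ) + 1) ^ (1 - δ)) ^ 2 + (c₂ * exp (-α * psum δ j (t - 1))) ^ 2) :=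
          add_sq_le
      _ ≤ _ := by linarith
  have hgeom : ∑ j ∈ range t, exp (-x) ^ (t - j) ≤ 1 / x := by
    rw [← sum_range_reflect]
    refine le_of_eq_of_le (sum_congr rfl fun j hj => ?_) (sum_range_exp_neg_pow_succ_le hx t)
    rw [show t - (t - 1 - j) = j + 1 by have := mem_range.mp hj; omega]
  calc ∑ j ∈ range t, φ j ^ 2
      ≤ 2 * c₁ ^ 2 * ∑ j ∈ range t, ((j : ℝ) + 1) ^ (δ - 1)
        + 2 * c₂ ^ 2 * ∑ j ∈ range t, exp (-x) ^ (t - j) := by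
        rw [mul_sum, mul_sum, ← sum_add_distrib]
        exact sum_le_sum hterm
    _ ≤ 2 * c₁ ^ 2 * ((t : ℝ) ^ δ / δ) + 2 * c₂ ^ 2 * (1 / x) := by
        gcongr
        exact sum_range_add_one_rpow_sub_one_le hδ₀ hδ₁ t
    _ = (2 * c₁ ^ 2 / δ + c₂ ^ 2 / α) * (t : ℝ) ^ δ := by
        have : (t : ℝ) ^ δ ≠ 0 := (rpow_pos_of_pos (by exact_mod_cast ht) δ).ne'
        simp only [x]
        field_simp

theorem appendixB_cesaro_square_bound_general (δ α c₁ c₂ : ℝ)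
    (hδ : δ ∈ Set.Ioo (0:ℝ) 1) (hα : 0 < α) :
    ∃ K : ℝ, ∀ φ : ℕ → ℕ → ℝ,
      (∀ j t : ℕ, j < t → 0 ≤ φ j t) →
      (∀ j t : ℕ, j < t →
        φ j t ≤ c₁ / ((j : ℝ) + 1) ^ (1 - δ) + c₂ * Real.exp (-α * psum δ j (t - 1))) →
      ∀ t : ℕ, 1 ≤ t →
        (1 / (t : ℝ)) * ∑ j ∈ Finset.range t, (φ j t) ^ 2 ≤ K / (t : ℝ) ^ (1 - δ) := by
  obtain ⟨hδ₀, hδ₁⟩ := hδ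
  refine ⟨2 * c₁ ^ 2 / δ + c₂ ^ 2 / α, fun φ hφ₀ hφ t ht => ?_⟩
  have ht₀ : (0 : ℝ) < t := by exact_mod_cast ht
  have hsum := sum_range_sq_le_mul_rpow hδ₀ hδ₁.le hα ht (φ := (φ · t))
    (fun j hj => hφ₀ j t hj) (fun j hj => hφ j t hj)
  rw [rpow_sub ht₀, rpow_one, div_div_eq_mul_div, one_div_mul_eq_div]
  exact div_le_div_of_nonneg_right hsum ht₀.le

/-- The analytic estimate of Appendix B for the Cesàro average of squared operator norms:
if 0 ≤ φ_{j,t} ≤ c₁/(j+1)^{1−δ} + c₂ exp(−α m_j^{t−1}) for 0 ≤ j < t, then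
(1/t) Σ_{j=0}^{t−1} φ_{j,t}² ≤ K/t^{1−δ} for a constant K depending only on δ, α, c₁, c₂. -/
theorem appendixB_cesaro_square_bound (δ α c₁ c₂ : ℝ)
    (hδ : δ ∈ Set.Ioo (0:ℝ) 1) (hα : 0 < α) (hc₁ : 0 ≤ c₁) (hc₂ : 0 ≤ c₂) :
    ∃ K : ℝ, ∀ φ : ℕ → ℕ → ℝ,
      (∀ j t : ℕ, j < t → 0 ≤ φ j t) →
      (∀ j t : ℕ, j < t →
        φ j t ≤ c₁ / ((j : ℝ) + 1) ^ (1 - δ) + c₂ * Real.exp (-α * psum δ j (t - 1))) →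
      ∀ t : ℕ, 1 ≤ t →
        (1 / (t : ℝ)) * ∑ j ∈ Finset.range t, (φ j t) ^ 2 ≤ K / (t : ℝ) ^ (1 - δ) :=
  appendixB_cesaro_square_bound_general δ α c₁ c₂ hδ hα
end
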